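/- arXiv:1801.00328 — 2 statements merged into one kernel-verified Lean document; each statement's English description precedes it below -/
import Mathlib

section
/- If a non-crossing spanning path of a set of points in convex position is not a boundary path (i.e., it contains at least one diagonal), then its two endpoints are not adjacent vertices on the convex hull boundary. -/
namespace PG

/-- The `k`-th vertex (mod `n`) of the convex polygon. -/
def pt (n : ℕ) (hn : 0 < n) (k : ℕ) : Fin n := ⟨k % n, Nat.mod_lt _ hn⟩

/-- `e` is a boundary (convex hull) edge of the convex `n`-gon. -/
def IsHullEdge {n : ℕ} (e : Sym2 (Fin n)) : Prop :=
  ∃ a b : Fin n, e = s(a, b) ∧ ((a.val + 1) % n = b.val ∨ (b.val + 1) % n = a.val)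

instance {n : ℕ} : DecidablePred (IsHullEdge (n := n)) := fun _ => by
  unfold IsHullEdge; infer_instance

/-- Two chords of the convex `n`-gon cross (intersect in interior points):
their endpoint pairs are all distinct and separate each other in the cyclic order. -/
def Crosses {n : ℕ} (e f : Sym2 (Fin n)) : Prop :=
  ∃ a b c d : Fin n, e = s(a, b) ∧ f = s(c, d) ∧
    a ≠ b ∧ c ≠ d ∧ a ≠ c ∧ a ≠ d ∧ b ≠ c ∧ b ≠ d ∧
    (((c.val + n - a.val) % n < (b.val + n - a.val) % n) ↔
      ¬((d.val + n - a.val) % n < (b.val + n - a.val) % n))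

instance {n : ℕ} (e f : Sym2 (Fin n)) : Decidable (Crosses e f) := by
  unfold Crosses; infer_instance

/-- The edge set of the spanning path visiting the points in the order given
by the permutation `p`. -/
def pathEdges {n : ℕ} (p : Equiv.Perm (Fin n)) : Finset (Sym2 (Fin n)) :=
  Finset.univ.filter (fun e => ∃ i j : Fin n, e = s(p i, p j) ∧ j.val = i.val + 1)

/-- `E` is the edge set of a non-crossing (plane) spanning path. -/
def IsNCPath {n : ℕ} (E : Finset (Sym2 (Fin n))) : Prop :=
  (∃ p : Equiv.Perm (Fin n), E = pathEdges p) ∧ ∀ e ∈ E, ∀ f ∈ E, ¬ Crosses e f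

instance {n : ℕ} : DecidablePred (IsNCPath (n := n)) := fun _ => by
  unfold IsNCPath pathEdges; infer_instance

/-- Vertices of the path graph `G(P)`: non-crossing spanning paths. -/
def PVert (n : ℕ) := {E : Finset (Sym2 (Fin n)) // IsNCPath E}

instance {n : ℕ} : Fintype (PVert n) := Subtype.fintype _
instance {n : ℕ} : DecidableEq (PVert n) := Subtype.instDecidableEq

/-- The path graph `G(P)`: two plane spanning paths are adjacent iff their
edge sets differ in exactly two edges. -/
def pathGraph (n : ℕ) : SimpleGraph (PVert n) where
  Adj u v := u ≠ v ∧ (u.1 \ v.1 ∪ v.1 \ u.1).card = 2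
  symm := by constructor; rintro u v ⟨h1, h2⟩; exact ⟨h1.symm, by rwa [Finset.union_comm]⟩
  loopless := by constructor; rintro u ⟨h, _⟩; exact h rfl

instance {n : ℕ} : DecidableRel (pathGraph n).Adj := fun u v => by
  unfold pathGraph; infer_instance

/-- `v` is a boundary path: all its edges are hull edges. -/
def IsBoundary {n : ℕ} (v : PVert n) : Prop := ∀ e ∈ v.1, IsHullEdge e

/-- Number of diagonals (the level) of a path. -/
def diagCount {n : ℕ} (v : PVert n) : ℕ :=
  (v.1.filter (fun e => ¬ IsHullEdge e)).card

/-- Degree of a point in an edge set. -/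
def degIn {n : ℕ} (E : Finset (Sym2 (Fin n))) (x : Fin n) : ℕ :=
  (E.filter (fun e => x ∈ e)).card

/-! After a rotation or reflection of the polygon, the path runs from `0` to `n - 1`, and such a
non-crossing path must be the boundary path `0, 1, …, n - 1`. Otherwise let `k` be the first
position whose vertex `v` differs from `k`; then `k < v < n - 1`, and the path, which visits `k`
later and ends at `n - 1`, has to leave the interval `[k, v)` through an edge that crosses the
edge `(k - 1, v)`. -/

section

variable {n : ℕ}

lemma val_add_sub_mod (a x : Fin n) : (x.val + n - a.val) % n = (x - a).val := by
  rw [Fin.val_sub]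
  congr 1
  omega

lemma val_sub_eq_sub_val_sub [NeZero n] {x y : Fin n} (h : x ≠ y) : (x - y).val = n - (y - x).val := by
  rw [← neg_sub, Fin.val_neg, if_neg (sub_ne_zero.mpr h.symm)]

lemma isHullEdge_mk_iff [NeZero n] {x y : Fin n} : IsHullEdge s(x, y) ↔ y - x = 1 ∨ x - y = 1 := by
  have hsucc : ∀ a b : Fin n, (a.val + 1) % n = b.val ↔ b - a = 1 := fun a b => by
    rw [sub_eq_iff_eq_add', Fin.ext_iff, Fin.val_add, Fin.val_one', Nat.add_mod_mod, eq_comm]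
  simp only [IsHullEdge, hsucc, Sym2.eq_iff]
  constructor
  · rintro ⟨a, b, ⟨rfl, rfl⟩ | ⟨rfl, rfl⟩, h⟩ <;> tauto
  · exact fun h => ⟨x, y, Or.inl ⟨rfl, rfl⟩, h⟩

lemma crosses_of_lt_of_lt_of_lt {a b c d : Fin n} (hac : a < c) (hcb : c < b) (hbd : b < d) :
    Crosses s(a, b) s(c, d) := by
  refine ⟨a, b, c, d, rfl, rfl, hac.trans hcb |>.ne, (hcb.trans hbd).ne, hac.ne,
    (hac.trans (hcb.trans hbd)).ne, hcb.ne', hbd.ne, ?_⟩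
  rw [val_add_sub_mod, val_add_sub_mod, val_add_sub_mod, Fin.sub_val_of_le hac.le,
    Fin.sub_val_of_le (hac.trans hcb).le, Fin.sub_val_of_le (hac.trans (hcb.trans hbd)).le]
  rw [Fin.lt_def] at hac hcb hbd
  omega

/-- Rotations and reflections of the cyclic order on `Fin n`, described through differences,
on which crossing and hull adjacency only depend. -/
def IsDihedral (σ : Equiv.Perm (Fin n)) : Prop :=
  (∀ x y, σ y - σ x = y - x) ∨ ∀ x y, σ y - σ x = x - y

namespace IsDihedral

variable {σ : Equiv.Perm (Fin n)}

lemma symm (hσ : IsDihedral σ) : IsDihedral σ.symm := by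
  rcases hσ with h | h
  · left
    intro x y
    simpa using (h (σ.symm x) (σ.symm y)).symm
  · right
    intro x y
    simpa using (h (σ.symm y) (σ.symm x)).symm

lemma crosses_map (hσ : IsDihedral σ) {e f : Sym2 (Fin n)} (h : Crosses e f) :
    Crosses (e.map σ) (f.map σ) := by
  obtain ⟨a, b, c, d, rfl, rfl, hab, hcd, hac, had, hbc, hbd, hsep⟩ := h
  have : NeZero n := NeZero.of_pos a.pos
  simp only [Sym2.map_mk, val_add_sub_mod] at hsep ⊢
  refine ⟨σ a, σ b, σ c, σ d, rfl, rfl, ?_⟩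
  simp only [ne_eq, σ.injective.eq_iff, val_add_sub_mod]
  refine ⟨hab, hcd, hac, had, hbc, hbd, ?_⟩
  rcases hσ with h | h
  · simpa only [h] using hsep
  · -- a reflection replaces each distance `(x - a).val` by `n - (x - a).val`
    have hcb : (c - a).val ≠ (b - a).val := fun h => hbc (sub_left_injective (Fin.ext h)).symm
    have hdb : (d - a).val ≠ (b - a).val := fun h => hbd (sub_left_injective (Fin.ext h)).symm
    simp only [h, val_sub_eq_sub_val_sub hac, val_sub_eq_sub_val_sub hab, val_sub_eq_sub_val_sub had]
    have := (c - a).isLt; have := (b - a).isLt; have := (d - a).isLt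
    omega

lemma crosses_map_iff (hσ : IsDihedral σ) {e f : Sym2 (Fin n)} :
    Crosses (e.map σ) (f.map σ) ↔ Crosses e f := by
  refine ⟨fun h => ?_, hσ.crosses_map⟩
  simpa [Sym2.map_map] using hσ.symm.crosses_map h

lemma isHullEdge_map_iff [NeZero n] (hσ : IsDihedral σ) {e : Sym2 (Fin n)} :
    IsHullEdge (e.map σ) ↔ IsHullEdge e := by
  induction e using Sym2.ind with
  | _ x y =>
    rw [Sym2.map_mk, isHullEdge_mk_iff, isHullEdge_mk_iff]
    rcases hσ with h | h <;> rw [h, h]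
    exact or_comm

end IsDihedral

lemma exists_isDihedral_of_isHullEdge [NeZero n] {a b : Fin n} (h : IsHullEdge s(a, b)) :
    ∃ σ : Equiv.Perm (Fin n), IsDihedral σ ∧ σ a = 0 ∧ σ b = -1 := by
  rcases isHullEdge_mk_iff.mp h with h | h
  · refine ⟨Equiv.subLeft a, Or.inr fun x y => ?_, sub_self a, ?_⟩
    · simp only [Equiv.subLeft_apply]; abel
    · simp only [Equiv.subLeft_apply, ← h]; abel
  · refine ⟨Equiv.subRight a, Or.inl fun x y => ?_, sub_self a, ?_⟩
    · simp only [Equiv.subRight_apply]; abel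
    · simp only [Equiv.subRight_apply, ← h]; abel

lemma mem_pathEdges {p : Equiv.Perm (Fin n)} {e : Sym2 (Fin n)} :
    e ∈ pathEdges p ↔ ∃ i j : Fin n, e = s(p i, p j) ∧ j.val = i.val + 1 := by
  simp [pathEdges]

lemma mk_castSucc_succ_mem_pathEdges {m : ℕ} (p : Equiv.Perm (Fin (m + 1))) (i : Fin m) :
    s(p i.castSucc, p i.succ) ∈ pathEdges p :=
  mem_pathEdges.mpr ⟨i.castSucc, i.succ, rfl, rfl⟩

lemma exists_castSucc_and_not_succ {m : ℕ} {P : Fin (m + 1) → Prop} {t : Fin (m + 1)}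
    (ht : P t) (hlast : ¬ P (Fin.last m)) :
    ∃ u : Fin m, t ≤ u.castSucc ∧ P u.castSucc ∧ ¬ P u.succ := by
  classical
  set S := Finset.univ.filter fun x => t ≤ x ∧ P x
  have hS : S.Nonempty := ⟨t, by simp [S, ht]⟩
  have hmax := Finset.mem_filter.mp (S.max'_mem hS)
  obtain ⟨u, hu⟩ := Fin.exists_castSucc_eq.mpr fun h => hlast (h ▸ hmax.2.2)
  rw [← hu] at hmax
  refine ⟨u, hmax.2.1, hmax.2.2, fun hP => (Fin.castSucc_lt_succ (i := u)).not_ge ?_⟩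
  rw [hu]
  exact S.le_max' u.succ (by simp [S, hP, hmax.2.1.trans (Fin.castSucc_lt_succ (i := u)).le])

lemma eq_one_of_not_crosses {m : ℕ} (q : Equiv.Perm (Fin (m + 1))) (h0 : q 0 = 0)
    (hlast : q (Fin.last m) = Fin.last m)
    (hnc : ∀ i j : Fin m, ¬ Crosses s(q i.castSucc, q i.succ) s(q j.castSucc, q j.succ)) :
    q = 1 := by
  suffices ∀ k, q k = k from Equiv.ext this
  intro k
  induction k using WellFoundedLT.induction with
  | _ k IH =>
  by_contra hk
  obtain ⟨i, rfl⟩ : ∃ i, Fin.succ i = k := Fin.exists_succ_eq.mpr (by rintro rfl; exact hk h0)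
  have hi_last : i.succ ≠ Fin.last m := fun h => hk (h ▸ hlast)
  set v := q i.succ
  have hv : i.succ < v :=
    lt_of_le_of_ne (not_lt.mp fun hlt => hk (q.injective (IH v hlt))) (Ne.symm hk)
  have hv_last : v < Fin.last m :=
    lt_of_le_of_ne (Fin.le_last v) fun h => hi_last (q.injective (h.trans hlast.symm))
  set t := q.symm i.succ
  have hqt : q t = i.succ := q.apply_symm_apply _
  have ht : i.succ < t :=
    lt_of_le_of_ne (not_lt.mp fun hlt => hlt.ne ((IH t hlt).symm.trans hqt))
      fun h => hk ((congrArg q h).trans hqt)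
  -- the path leaves the interval `[i.succ, v)` after visiting `i.succ` at time `t`
  obtain ⟨u, htu, ⟨hu_ge, hu_lt⟩, hexit⟩ :=
    exists_castSucc_and_not_succ (P := fun x => i.succ ≤ q x ∧ q x < v) (t := t)
      ⟨hqt.ge, hqt ▸ hv⟩
      (by rw [hlast]; exact fun h => lt_asymm h.2 hv_last)
  have hiu : i.succ < u.succ := ht.trans_le (htu.trans (Fin.castSucc_lt_succ (i := u)).le)
  have hv_lt : v < q u.succ := by
    rcases not_and_or.mp hexit with h | h
    · exact absurd (q.injective (IH _ (not_le.mp h)) ▸ not_le.mp h) hiu.not_gt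
    · exact lt_of_le_of_ne (not_lt.mp h) fun h => hiu.ne (q.injective h)
  have hi : q i.castSucc = i.castSucc := IH _ (Fin.castSucc_lt_succ (i := i))
  refine hnc i u (crosses_of_lt_of_lt_of_lt ?_ hu_lt hv_lt)
  rw [hi]
  exact (Fin.castSucc_lt_succ (i := i)).trans_le hu_ge

end

/-- If a non-crossing spanning path is not a boundary path, then its two
endpoints are not neighboring vertices of the convex hull. -/
theorem endpoints_not_neighboring_of_not_boundary (n : ℕ) (hn : 3 ≤ n)
    (p : Equiv.Perm (Fin n))
    (hnc : ∀ e ∈ pathEdges p, ∀ f ∈ pathEdges p, ¬ Crosses e f)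
    (hdiag : ∃ e ∈ pathEdges p, ¬ IsHullEdge e) :
    ¬ IsHullEdge (s(p ⟨0, by omega⟩, p ⟨n - 1, by omega⟩)) := by
  obtain ⟨m, rfl⟩ : ∃ m, n = m + 1 := ⟨n - 1, by omega⟩
  intro hends
  obtain ⟨σ, hσ, h0, hlast⟩ := exists_isDihedral_of_isHullEdge hends
  have hq : p.trans σ = 1 := by
    refine eq_one_of_not_crosses _ h0 ?_ fun i j hc => hnc _
      (mk_castSucc_succ_mem_pathEdges p i) _ (mk_castSucc_succ_mem_pathEdges p j) ?_
    · have hL : (⟨m + 1 - 1, by omega⟩ : Fin (m + 1)) = Fin.last m := Fin.ext (by simp)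
      have hneg : (-1 : Fin (m + 1)) = Fin.last m := Fin.ext (by rw [Fin.coe_neg_one, Fin.val_last])
      rwa [hL, hneg] at hlast
    · rw [← hσ.crosses_map_iff, Sym2.map_mk, Sym2.map_mk]
      exact hc
  obtain ⟨e, he, hdiag⟩ := hdiag
  obtain ⟨i, j, rfl, hij⟩ := mem_pathEdges.mp he
  have hσp : ∀ k, σ (p k) = k := fun k => Equiv.ext_iff.mp hq k
  apply hdiag
  rw [← hσ.isHullEdge_map_iff, Sym2.map_mk, hσp, hσp]
  exact ⟨i, j, rfl, Or.inl (by rw [← hij, Nat.mod_eq_of_lt j.isLt])⟩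

end PG
end

section
/- Let u and v be two distinct boundary paths of a convex point set P with n ≥ 5 points, missing hull edges e_u and e_v respectively. Then e_u and e_v share an endpoint if and only if the edge (u,v) of the path graph G(P) is not contained in any maximal clique of size 4. -/
namespace PG

/-- A maximal clique in a graph. -/
def IsMaxClique {V : Type*} (G : SimpleGraph V) (s : Set V) : Prop :=
  G.IsClique s ∧ ∀ t : Set V, G.IsClique t → s ⊆ t → t ⊆ s

/-!
Let `u`, `v` be the boundary paths missing the hull edges `s(a, a + 1)` and `s(b, b + 1)`.
Any two boundary paths are adjacent in `G(P)`, and a common neighbour of `u` and `v` is either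
a boundary path or the hull with both missing edges deleted and one diagonal `d` added. A vertex
of a path has at most two neighbours and a path has no cycle, so `d` joins two of `a, a + 1, b,
b + 1` without closing one of the two arcs between them: `d = s(a + 1, b + 1)` or `d = s(a, b)`.

If the missing edges share a vertex, both candidates are hull edges, so every clique through
`u` and `v` consists of boundary paths, and a maximal one contains all `n ≥ 5` of them.
Otherwise both candidates are paths, and with `u` and `v` they form a clique of size 4. It is
maximal: a further common neighbour would be a boundary path other than `u`, `v`, and such a path
lacks two edges of each one-diagonal path.
-/

open Fin.CommRing Finset

section cyclic
variable {n : ℕ}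

lemma val_sub_eq_ite (a b : Fin n) :
    (a - b).val = if b.val ≤ a.val then a.val - b.val else n + a.val - b.val := by
  split_ifs with h
  · exact Fin.coe_sub_iff_le.2 h
  · exact Fin.coe_sub_iff_lt.2 (by simpa using h)

lemma add_sub_mod_eq_ite {a b : ℕ} (ha : a < n) (hb : b < n) :
    (a + n - b) % n = if b ≤ a then a - b else a + n - b := by
  split_ifs with h
  · rw [show a + n - b = a - b + n by omega, Nat.add_mod_right, Nat.mod_eq_of_lt (by omega)]
  · exact Nat.mod_eq_of_lt (by omega)

lemma val_one_of_two_le [NeZero n] (hn : 2 ≤ n) : (1 : Fin n).val = 1 := by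
  rw [Fin.val_one', Nat.mod_eq_of_lt hn]

lemma sub_one_ne_add_one [NeZero n] (hn : 3 ≤ n) (x : Fin n) : x - 1 ≠ x + 1 := by
  have := x.isLt
  simp only [ne_eq, Fin.ext_iff, val_sub_eq_ite, Fin.val_add_eq_ite,
    val_one_of_two_le (by omega : 2 ≤ n)]
  split_ifs <;> omega

lemma eq_add_one_of_val_eq [NeZero n] {i j : Fin n} (h : j.val = i.val + 1) : j = i + 1 := by
  have := j.isLt
  rw [Fin.ext_iff, Fin.val_add, Fin.val_one', Nat.add_mod_mod, Nat.mod_eq_of_lt (by omega), h]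

lemma add_add_one_ne [NeZero n] (hn : 2 ≤ n) {i j c : Fin n} (hi : i.val < c.val)
    (hj : c.val ≤ j.val) : i + j + 1 ≠ c := by
  have := j.isLt
  simp only [ne_eq, Fin.ext_iff, Fin.val_add_eq_ite, val_one_of_two_le hn]
  split_ifs <;> omega

end cyclic

def hullEdges (n : ℕ) [NeZero n] : Finset (Sym2 (Fin n)) := univ.image fun x => s(x, x + 1)

section hull
variable {n : ℕ} [NeZero n]

lemma mem_hullEdges {e : Sym2 (Fin n)} : e ∈ hullEdges n ↔ ∃ x, s(x, x + 1) = e := by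
  simp [hullEdges]

lemma mk_mem_hullEdges (x : Fin n) : s(x, x + 1) ∈ hullEdges n := mem_hullEdges.2 ⟨x, rfl⟩

lemma mk_mem_hullEdges_iff {x y : Fin n} : s(x, y) ∈ hullEdges n ↔ y = x + 1 ∨ x = y + 1 := by
  rw [mem_hullEdges]
  constructor
  · rintro ⟨z, hz⟩
    rcases Sym2.eq_iff.1 hz with ⟨rfl, rfl⟩ | ⟨rfl, rfl⟩ <;> simp
  · rintro (rfl | rfl)
    · exact ⟨x, rfl⟩
    · exact ⟨y, Sym2.eq_swap⟩

lemma isHullEdge_iff (hn : 2 ≤ n) {e : Sym2 (Fin n)} : IsHullEdge e ↔ e ∈ hullEdges n := by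
  have hsucc (a b : Fin n) : (a.val + 1) % n = b.val ↔ b = a + 1 := by
    rw [Fin.ext_iff, Fin.val_add, val_one_of_two_le hn, eq_comm]
  simp only [IsHullEdge, hsucc, mem_hullEdges]
  constructor
  · rintro ⟨a, b, rfl, rfl | rfl⟩
    · exact ⟨a, rfl⟩
    · exact ⟨b, Sym2.eq_swap⟩
  · rintro ⟨x, rfl⟩
    exact ⟨x, x + 1, rfl, Or.inl rfl⟩

lemma hullEdge_injective (hn : 3 ≤ n) : Function.Injective fun x : Fin n => s(x, x + 1) := by
  intro x y h
  rcases Sym2.eq_iff.1 h with ⟨h, -⟩ | ⟨h, h'⟩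
  · exact h
  · have hx : x + 1 + 1 = x := by rw [h', h]
    have := x.isLt
    simp only [Fin.ext_iff, Fin.val_add_eq_ite, val_one_of_two_le (by omega : 2 ≤ n)] at hx
    split_ifs at hx <;> omega

lemma card_hullEdges (hn : 3 ≤ n) : (hullEdges n).card = n := by
  rw [hullEdges, card_image_of_injective _ (hullEdge_injective hn), card_univ, Fintype.card_fin]

lemma exists_mem_mk_add_one_and_mem_iff {a b : Fin n} (hab : a ≠ b) :
    (∃ x, x ∈ s(a, a + 1) ∧ x ∈ s(b, b + 1)) ↔ b = a + 1 ∨ a = b + 1 := by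
  simp only [Sym2.mem_iff]
  constructor
  · rintro ⟨x, rfl | rfl, h | h⟩
    · exact absurd h hab
    · exact Or.inr h
    · exact Or.inl h.symm
    · exact absurd (add_right_cancel h) hab
  · rintro (rfl | rfl)
    · exact ⟨a + 1, Or.inr rfl, Or.inl rfl⟩
    · exact ⟨b + 1, Or.inl rfl, Or.inr rfl⟩

end hull

section path
variable {n : ℕ} {p : Equiv.Perm (Fin n)}

lemma mk_mem_pathEdges_iff {x y : Fin n} :
    s(x, y) ∈ pathEdges p ↔
      (p.symm y).val = (p.symm x).val + 1 ∨ (p.symm x).val = (p.symm y).val + 1 := by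
  simp only [pathEdges, mem_filter, mem_univ, true_and, Sym2.eq_iff]
  constructor
  · rintro ⟨i, j, ⟨rfl, rfl⟩ | ⟨rfl, rfl⟩, hij⟩ <;> simp [hij]
  · rintro (h | h)
    · exact ⟨p.symm x, p.symm y, Or.inl (by simp), h⟩
    · exact ⟨p.symm y, p.symm x, Or.inr (by simp), h⟩

lemma ne_of_mk_mem_pathEdges {x y : Fin n} (h : s(x, y) ∈ pathEdges p) : x ≠ y := by
  rintro rfl
  rw [mk_mem_pathEdges_iff] at h
  omega

lemma not_three_neighbours {x y₁ y₂ y₃ : Fin n} (h₁₂ : y₁ ≠ y₂) (h₁₃ : y₁ ≠ y₃)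
    (h₂₃ : y₂ ≠ y₃) (h₁ : s(x, y₁) ∈ pathEdges p) (h₂ : s(x, y₂) ∈ pathEdges p)
    (h₃ : s(x, y₃) ∈ pathEdges p) : False := by
  have hne {y z : Fin n} (h : y ≠ z) : (p.symm y).val ≠ (p.symm z).val :=
    fun h' => h (p.symm.injective (Fin.ext h'))
  have := hne h₁₂
  have := hne h₁₃
  have := hne h₂₃
  rw [mk_mem_pathEdges_iff] at h₁ h₂ h₃
  omega

lemma exists_mem_forall_neighbours_eq {S : Finset (Fin n)} (hS : S.Nonempty) :
    ∃ x ∈ S, ∀ y ∈ S, ∀ z ∈ S,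
      s(x, y) ∈ pathEdges p → s(x, z) ∈ pathEdges p → y = z := by
  obtain ⟨x, hxS, hmin⟩ := S.exists_min_image (fun x => (p.symm x).val) hS
  refine ⟨x, hxS, fun y hy z hz hxy hxz => p.symm.injective (Fin.ext ?_)⟩
  rw [mk_mem_pathEdges_iff] at hxy hxz
  have := hmin y hy
  have := hmin z hz
  omega

lemma card_pathEdges (p : Equiv.Perm (Fin n)) : (pathEdges p).card = n - 1 := by
  cases n with
  | zero => rfl
  | succ k =>
    have : pathEdges p = univ.image fun i : Fin k => s(p i.castSucc, p i.succ) := by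
      ext e
      induction e using Sym2.ind with | h x y => ?_
      rw [mk_mem_pathEdges_iff, mem_image]
      constructor
      · rintro (h | h)
        · exact ⟨⟨(p.symm x).val, by omega⟩, mem_univ _, by
            rw [show Fin.castSucc _ = p.symm x from Fin.ext rfl,
              show Fin.succ _ = p.symm y from Fin.ext (by simp [h])]; simp⟩
        · exact ⟨⟨(p.symm y).val, by omega⟩, mem_univ _, by
            rw [show Fin.castSucc _ = p.symm y from Fin.ext rfl,
              show Fin.succ _ = p.symm x from Fin.ext (by simp [h]), Sym2.eq_swap]; simp⟩
      · rintro ⟨i, -, hi⟩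
        rcases Sym2.eq_iff.1 hi with ⟨rfl, rfl⟩ | ⟨rfl, rfl⟩ <;> simp
    rw [this, card_image_of_injective _ fun i j hij => ?_, card_univ, Fintype.card_fin]
    · rfl
    rcases Sym2.eq_iff.1 hij with ⟨h, -⟩ | ⟨h, h'⟩
    · exact Fin.castSucc_injective _ (p.injective h)
    · have h₁ := congrArg Fin.val (p.injective h)
      have h₂ := congrArg Fin.val (p.injective h')
      simp only [Fin.val_castSucc, Fin.val_succ] at h₁ h₂
      omega

lemma pathEdges_eq_of_forall_mem {E : Finset (Sym2 (Fin n))} (hE : E.card = n - 1)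
    (h : ∀ i j : Fin n, j.val = i.val + 1 → s(p i, p j) ∈ E) : pathEdges p = E := by
  refine eq_of_subset_of_card_le (fun e he => ?_) (by rw [hE, card_pathEdges])
  simp only [pathEdges, mem_filter, mem_univ, true_and] at he
  obtain ⟨i, j, rfl, hij⟩ := he
  exact h i j hij

lemma card_edges (t : PVert n) : t.1.card = n - 1 := by
  obtain ⟨⟨p, hp⟩, -⟩ := t.2
  rw [hp, card_pathEdges]

lemma adj_iff_card_sdiff_eq_one {u v : PVert n} :
    (pathGraph n).Adj u v ↔ (u.1 \ v.1).card = 1 := by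
  have hcomm : (u.1 \ v.1).card = (v.1 \ u.1).card :=
    card_sdiff_comm (by rw [card_edges, card_edges])
  change u ≠ v ∧ (u.1 \ v.1 ∪ v.1 \ u.1).card = 2 ↔ _
  rw [card_union_of_disjoint disjoint_sdiff_sdiff, ← hcomm]
  constructor
  · rintro ⟨-, h⟩
    omega
  · intro h
    refine ⟨?_, by omega⟩
    rintro rfl
    simp at h

end path

section crossing
variable {n : ℕ} [NeZero n]

lemma not_crosses_of_mem_hullEdges_left (hn : 2 ≤ n) {e f : Sym2 (Fin n)}
    (he : e ∈ hullEdges n) : ¬ Crosses e f := by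
  obtain ⟨x, rfl⟩ := mem_hullEdges.1 he
  rintro ⟨a, b, c, d, hab, -, -, -, hac, had, hbc, hbd, h⟩
  rw [add_sub_mod_eq_ite c.isLt a.isLt, add_sub_mod_eq_ite d.isLt a.isLt,
    add_sub_mod_eq_ite b.isLt a.isLt] at h
  have := c.isLt
  have := d.isLt
  rcases Sym2.eq_iff.1 hab with ⟨rfl, rfl⟩ | ⟨rfl, rfl⟩ <;>
  · simp only [ne_eq, Fin.ext_iff, Fin.val_add_eq_ite, val_one_of_two_le hn] at *
    split_ifs at * <;> omega

lemma not_crosses_of_mem_hullEdges_right (hn : 2 ≤ n) {e f : Sym2 (Fin n)}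
    (hf : f ∈ hullEdges n) : ¬ Crosses e f := by
  obtain ⟨x, rfl⟩ := mem_hullEdges.1 hf
  rintro ⟨a, b, c, d, -, hcd, -, -, hac, had, hbc, hbd, h⟩
  rw [add_sub_mod_eq_ite c.isLt a.isLt, add_sub_mod_eq_ite d.isLt a.isLt,
    add_sub_mod_eq_ite b.isLt a.isLt] at h
  have := a.isLt
  have := b.isLt
  rcases Sym2.eq_iff.1 hcd with ⟨rfl, rfl⟩ | ⟨rfl, rfl⟩ <;>
  · simp only [ne_eq, Fin.ext_iff, Fin.val_add_eq_ite, val_one_of_two_le hn] at *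
    split_ifs at * <;> omega

lemma isNCPath_of_subset_insert (hn : 2 ≤ n) {p : Equiv.Perm (Fin n)} {d : Sym2 (Fin n)}
    (hp : pathEdges p ⊆ insert d (hullEdges n)) : IsNCPath (pathEdges p) := by
  refine ⟨⟨p, rfl⟩, fun e he f hf => ?_⟩
  rcases mem_insert.1 (hp he) with rfl | he
  · rcases mem_insert.1 (hp hf) with rfl | hf
    · rintro ⟨a, b, c, d, h₁, h₂, -, -, hac, had, -⟩
      rcases Sym2.eq_iff.1 (h₁.symm.trans h₂) with ⟨h, -⟩ | ⟨h, -⟩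
      exacts [hac h, had h]
    · exact not_crosses_of_mem_hullEdges_right hn hf
  · exact not_crosses_of_mem_hullEdges_left hn he

end crossing

section boundary
variable {n : ℕ} [NeZero n]

lemma card_erase_hullEdges (hn : 3 ≤ n) (c : Fin n) :
    ((hullEdges n).erase s(c, c + 1)).card = n - 1 := by
  rw [card_erase_of_mem (mk_mem_hullEdges c), card_hullEdges hn]

lemma pathEdges_addLeft (hn : 3 ≤ n) (c : Fin n) :
    pathEdges (Equiv.addLeft (c + 1)) = (hullEdges n).erase s(c, c + 1) := by
  refine pathEdges_eq_of_forall_mem (card_erase_hullEdges hn c) fun i j hij => ?_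
  obtain rfl := eq_add_one_of_val_eq hij
  change s(c + 1 + i, c + 1 + (i + 1)) ∈ _
  rw [← add_assoc]
  refine mem_erase.2 ⟨(hullEdge_injective hn).ne fun h => ?_, mk_mem_hullEdges _⟩
  rw [show i + 1 = 0 by linear_combination h, Fin.val_zero] at hij
  omega

def boundaryPath (hn : 3 ≤ n) (c : Fin n) : PVert n :=
  ⟨(hullEdges n).erase s(c, c + 1), by
    rw [← pathEdges_addLeft hn c]
    exact isNCPath_of_subset_insert (d := s(c, c + 1)) (by omega)
      (pathEdges_addLeft hn c ▸ (erase_subset _ _).trans (subset_insert _ _))⟩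

lemma boundaryPath_val (hn : 3 ≤ n) (c : Fin n) :
    (boundaryPath hn c).1 = (hullEdges n).erase s(c, c + 1) := rfl

lemma boundaryPath_injective (hn : 3 ≤ n) : Function.Injective (boundaryPath hn) := by
  intro c c' h
  by_contra hne
  have : s(c, c + 1) ∈ (boundaryPath hn c').1 :=
    mem_erase.2 ⟨(hullEdge_injective hn).ne hne, mk_mem_hullEdges c⟩
  rw [← h, boundaryPath_val] at this
  exact notMem_erase _ _ this

lemma eq_boundaryPath (hn : 3 ≤ n) {t : PVert n} {c : Fin n} (ht : t.1 ⊆ hullEdges n)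
    (hc : s(c, c + 1) ∉ t.1) : t = boundaryPath hn c :=
  Subtype.ext <| eq_of_subset_of_card_le
    (fun e he => mem_erase.2 ⟨fun h => hc (h ▸ he), ht he⟩)
    (by rw [boundaryPath_val, card_erase_hullEdges hn, card_edges])

lemma exists_eq_boundaryPath (hn : 3 ≤ n) {t : PVert n} (ht : t.1 ⊆ hullEdges n) :
    ∃ c, t = boundaryPath hn c := by
  obtain ⟨e, he, het⟩ := exists_mem_notMem_of_card_lt_card (s := t.1) (t := hullEdges n)
    (by rw [card_edges, card_hullEdges hn]; omega)
  obtain ⟨c, rfl⟩ := mem_hullEdges.1 he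
  exact ⟨c, eq_boundaryPath hn ht het⟩

lemma boundaryPath_adj (hn : 3 ≤ n) {a b : Fin n} (hab : a ≠ b) :
    (pathGraph n).Adj (boundaryPath hn a) (boundaryPath hn b) := by
  rw [adj_iff_card_sdiff_eq_one, card_eq_one]
  refine ⟨s(b, b + 1), ?_⟩
  ext e
  have := (hullEdge_injective hn).ne hab
  simp only [boundaryPath_val, mem_sdiff, mem_erase, mem_singleton]
  constructor
  · tauto
  · rintro rfl
    exact ⟨⟨this.symm, mk_mem_hullEdges b⟩, fun h => h.1 rfl⟩

end boundary

section oneDiagonal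
variable {n : ℕ} [NeZero n] {a b : Fin n} {d : Sym2 (Fin n)}

def oneDiagEdges (a b : Fin n) (d : Sym2 (Fin n)) : Finset (Sym2 (Fin n)) :=
  insert d (((hullEdges n).erase s(a, a + 1)).erase s(b, b + 1))

lemma mem_oneDiagEdges {e : Sym2 (Fin n)} : e ∈ oneDiagEdges a b d ↔
    e = d ∨ e ≠ s(b, b + 1) ∧ e ≠ s(a, a + 1) ∧ e ∈ hullEdges n := by
  simp only [oneDiagEdges, mem_insert, mem_erase]

lemma oneDiagEdges_comm : oneDiagEdges a b d = oneDiagEdges b a d := by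
  rw [oneDiagEdges, oneDiagEdges, erase_right_comm]

lemma mk_mem_oneDiagEdges (hn : 3 ≤ n) {x : Fin n} (ha : x ≠ a) (hb : x ≠ b) :
    s(x, x + 1) ∈ oneDiagEdges a b d :=
  mem_oneDiagEdges.2 <| Or.inr
    ⟨(hullEdge_injective hn).ne hb, (hullEdge_injective hn).ne ha, mk_mem_hullEdges x⟩

lemma card_oneDiagEdges (hn : 3 ≤ n) (hab : a ≠ b) (hd : d ∉ hullEdges n) :
    (oneDiagEdges a b d).card = n - 1 := by
  rw [oneDiagEdges, card_insert_of_notMem fun h => hd (mem_of_mem_erase (mem_of_mem_erase h)),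
    card_erase_of_mem (mem_erase.2 ⟨(hullEdge_injective hn).ne hab.symm, mk_mem_hullEdges b⟩),
    card_erase_hullEdges hn]
  omega

lemma eq_boundaryPath_or_eq_oneDiagEdges (hn : 3 ≤ n) (hab : a ≠ b) {t : PVert n}
    (ha : (pathGraph n).Adj (boundaryPath hn a) t)
    (hb : (pathGraph n).Adj (boundaryPath hn b) t) :
    (∃ c, t = boundaryPath hn c) ∨ ∃ d ∉ hullEdges n, t.1 = oneDiagEdges a b d := by
  by_cases ht : t.1 ⊆ hullEdges n
  · exact Or.inl (exists_eq_boundaryPath hn ht)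
  obtain ⟨d, hdt, hd⟩ := not_subset.1 ht
  refine Or.inr ⟨d, hd, ?_⟩
  have eq_d (c : Fin n) (hc : (pathGraph n).Adj (boundaryPath hn c) t) (e : Sym2 (Fin n))
      (he : e ∈ t.1) (hec : e ∉ (boundaryPath hn c).1) : e = d := by
    rw [(pathGraph n).adj_comm, adj_iff_card_sdiff_eq_one] at hc
    exact card_le_one.1 hc.le e (mem_sdiff.2 ⟨he, hec⟩) d
      (mem_sdiff.2 ⟨hdt, fun h => hd (mem_of_mem_erase h)⟩)
  refine eq_of_subset_of_card_le (fun e he => ?_)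
    (by rw [card_oneDiagEdges hn hab hd, card_edges])
  by_cases hed : e = d
  · exact mem_oneDiagEdges.2 (Or.inl hed)
  have hea : e ∈ (boundaryPath hn a).1 := by_contra fun h => hed (eq_d a ha e he h)
  have heb : e ∈ (boundaryPath hn b).1 := by_contra fun h => hed (eq_d b hb e he h)
  rw [boundaryPath_val, mem_erase] at hea heb
  exact mem_oneDiagEdges.2 (Or.inr ⟨heb.1, hea.1, hea.2⟩)

lemma boundaryPath_adj_of_eq_oneDiagEdges (hn : 3 ≤ n) (hab : a ≠ b) (hd : d ∉ hullEdges n)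
    {t : PVert n} (ht : t.1 = oneDiagEdges a b d) : (pathGraph n).Adj (boundaryPath hn a) t := by
  rw [adj_iff_card_sdiff_eq_one, card_eq_one]
  refine ⟨s(b, b + 1), ?_⟩
  ext e
  have := (hullEdge_injective hn).ne hab
  simp only [boundaryPath_val, ht, mem_sdiff, mem_erase, mem_oneDiagEdges, mem_singleton]
  constructor
  · tauto
  · rintro rfl
    refine ⟨⟨this.symm, mk_mem_hullEdges b⟩, ?_⟩
    rintro (h | h)
    exacts [hd (h ▸ mk_mem_hullEdges b), h.1 rfl]

lemma adj_of_eq_oneDiagEdges {d' : Sym2 (Fin n)} (hd : d ∉ hullEdges n) (hdd' : d ≠ d')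
    {t t' : PVert n} (ht : t.1 = oneDiagEdges a b d) (ht' : t'.1 = oneDiagEdges a b d') :
    (pathGraph n).Adj t t' := by
  rw [adj_iff_card_sdiff_eq_one, card_eq_one]
  refine ⟨d, ?_⟩
  ext e
  simp only [ht, ht', mem_sdiff, mem_oneDiagEdges, mem_singleton]
  constructor
  · tauto
  · rintro rfl
    exact ⟨Or.inl rfl, by rintro (h | h) <;> tauto⟩

lemma not_adj_boundaryPath_of_eq_oneDiagEdges (hn : 3 ≤ n) (hab : a ≠ b)
    (hd : d ∉ hullEdges n) {c : Fin n} (hca : c ≠ a) (hcb : c ≠ b) {t : PVert n}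
    (ht : t.1 = oneDiagEdges a b d) :
    ¬ (pathGraph n).Adj (boundaryPath hn c) t := by
  have hmem {x : Fin n} (hxc : x ≠ c) (hx : x = a ∨ x = b) :
      s(x, x + 1) ∈ (boundaryPath hn c).1 \ t.1 := by
    rw [mem_sdiff, boundaryPath_val, mem_erase, ht, mem_oneDiagEdges]
    refine ⟨⟨(hullEdge_injective hn).ne hxc, mk_mem_hullEdges x⟩, ?_⟩
    rintro (h | ⟨hb, ha, -⟩)
    · exact hd (h ▸ mk_mem_hullEdges x)
    · rcases hx with rfl | rfl
      exacts [ha rfl, hb rfl]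
  rw [adj_iff_card_sdiff_eq_one]
  intro h
  exact hab <| hullEdge_injective hn <| card_le_one.1 h.le _ (hmem hca.symm (Or.inl rfl)) _
    (hmem hcb.symm (Or.inr rfl))

end oneDiagonal

section arc
variable {n : ℕ} {c e x : Fin n}

def arc (c e : Fin n) : Finset (Fin n) := univ.filter fun x => (x - c).val ≤ (e - c).val

lemma mem_arc : x ∈ arc c e ↔ (x - c).val ≤ (e - c).val := by simp [arc]

lemma left_mem_arc [NeZero n] : c ∈ arc c e := by simp [mem_arc]

lemma right_mem_arc [NeZero n] : e ∈ arc c e := by simp [mem_arc]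

lemma add_one_mem_arc [NeZero n] (hn : 2 ≤ n) (hx : x ∈ arc c e) (hxe : x ≠ e) :
    x + 1 ∈ arc c e := by
  have := x.isLt
  have := e.isLt
  simp only [mem_arc, ne_eq, Fin.ext_iff, val_sub_eq_ite, Fin.val_add_eq_ite,
    val_one_of_two_le hn] at *
  split_ifs at * <;> omega

lemma sub_one_mem_arc [NeZero n] (hn : 2 ≤ n) (hx : x ∈ arc c e) (hxc : x ≠ c) :
    x - 1 ∈ arc c e := by
  have := c.isLt
  have := e.isLt
  simp only [mem_arc, ne_eq, Fin.ext_iff, val_sub_eq_ite, val_one_of_two_le hn] at *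
  split_ifs at * <;> omega

lemma sub_one_ne_of_mem_arc [NeZero n] (hn : 2 ≤ n) (hx : x ∈ arc c e) (hxc : x ≠ c) :
    x - 1 ≠ e := by
  have := c.isLt
  have := e.isLt
  simp only [mem_arc, ne_eq, Fin.ext_iff, val_sub_eq_ite, val_one_of_two_le hn] at *
  split_ifs at * <;> omega

lemma sub_one_notMem_arc [NeZero n] (hn : 2 ≤ n) (h : e ≠ c - 1) : c - 1 ∉ arc c e := by
  have := c.isLt
  have := e.isLt
  simp only [mem_arc, ne_eq, Fin.ext_iff, val_sub_eq_ite, val_one_of_two_le hn] at *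
  split_ifs at * <;> omega

end arc

section oneDiagonalPaths
variable {n : ℕ} [NeZero n] {a b : Fin n} {d : Sym2 (Fin n)}

lemma endpoint_eq_of_eq_oneDiagEdges (hn : 3 ≤ n) {t : PVert n} (ht : t.1 = oneDiagEdges a b d)
    (hd : d ∉ hullEdges n) {x y : Fin n} (hxy : s(x, y) = d) :
    x = a ∨ x = a + 1 ∨ x = b ∨ x = b + 1 := by
  obtain ⟨⟨p, hp⟩, -⟩ := t.2
  rw [hp] at ht
  -- at any other vertex both hull edges survive, and `d` would be a third edge there
  by_contra! h
  obtain ⟨hxa, hxa1, hxb, hxb1⟩ := h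
  rw [← hxy, mk_mem_hullEdges_iff, not_or] at hd
  have hprev : s(x, x - 1) ∈ pathEdges p := by
    rw [ht, Sym2.eq_swap (a := x), show s(x - 1, x) = s(x - 1, x - 1 + 1) by rw [sub_add_cancel]]
    exact mk_mem_oneDiagEdges hn (fun h => hxa1 (sub_eq_iff_eq_add.1 h))
      (fun h => hxb1 (sub_eq_iff_eq_add.1 h))
  have hnext : s(x, x + 1) ∈ pathEdges p := ht ▸ mk_mem_oneDiagEdges hn hxa hxb
  have hdiag : s(x, y) ∈ pathEdges p := ht ▸ hxy ▸ mem_insert_self _ _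
  exact not_three_neighbours (sub_one_ne_add_one hn x) (fun h => hd.2 (sub_eq_iff_eq_add.1 h))
    (Ne.symm hd.1) hprev hnext hdiag

lemma ne_oneDiagEdges_closing_arc (hn : 3 ≤ n) (hab : a ≠ b) (hd : s(a + 1, b) ∉ hullEdges n)
    (t : PVert n) : t.1 ≠ oneDiagEdges a b s(a + 1, b) := by
  intro ht
  obtain ⟨⟨p, hp⟩, -⟩ := t.2
  rw [hp] at ht
  have hn2 : 2 ≤ n := by omega
  have hdp : s(a + 1, b) ∈ pathEdges p := by rw [ht]; exact mem_insert_self _ _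
  have ha1b : a + 1 ≠ b := ne_of_mk_mem_pathEdges hdp
  rw [mk_mem_hullEdges_iff, not_or] at hd
  have ha : a ∉ arc (a + 1) b := by
    have := sub_one_notMem_arc hn2 (c := a + 1) (e := b)
      (by rw [add_sub_cancel_right]; exact hab.symm)
    rwa [add_sub_cancel_right] at this
  have hnext {x : Fin n} (hx : x ∈ arc (a + 1) b) (hxb : x ≠ b) :
      s(x, x + 1) ∈ pathEdges p := by
    rw [ht]
    exact mk_mem_oneDiagEdges hn (by rintro rfl; exact ha hx) hxb
  have hprev {x : Fin n} (hx : x ∈ arc (a + 1) b) (hxa : x ≠ a + 1) :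
      s(x, x - 1) ∈ pathEdges p := by
    rw [ht, Sym2.eq_swap (a := x), show s(x - 1, x) = s(x - 1, x - 1 + 1) by rw [sub_add_cancel]]
    exact mk_mem_oneDiagEdges hn (fun h => hxa (sub_eq_iff_eq_add.1 h))
      (sub_one_ne_of_mem_arc hn2 hx hxa)
  -- the arc from `a + 1` to `b` closed by the diagonal is a cycle: its first vertex along the
  -- path would have two neighbours in it
  obtain ⟨x, hx, huniq⟩ := exists_mem_forall_neighbours_eq (p := p) ⟨_, left_mem_arc (e := b)⟩
  by_cases hxa : x = a + 1
  · subst hxa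
    exact hd.1 (huniq _ right_mem_arc _ (add_one_mem_arc hn2 hx ha1b) hdp (hnext hx ha1b))
  by_cases hxb : x = b
  · subst hxb
    refine hd.1 (sub_eq_iff_eq_add.1 (huniq _ left_mem_arc _ (sub_one_mem_arc hn2 hx hxa)
      (by rwa [Sym2.eq_swap]) (hprev hx hxa)).symm)
  · exact sub_one_ne_add_one hn x (huniq _ (sub_one_mem_arc hn2 hx hxa) _
      (add_one_mem_arc hn2 hx hxb) (hprev hx hxa) (hnext hx hxb))

lemma diagonal_eq_of_eq_oneDiagEdges (hn : 3 ≤ n) (hab : a ≠ b) {t : PVert n}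
    (ht : t.1 = oneDiagEdges a b d) (hd : d ∉ hullEdges n) :
    d = s(a + 1, b + 1) ∨ d = s(a, b) := by
  have hcycle : d ≠ s(a + 1, b) := by
    rintro rfl
    exact ne_oneDiagEdges_closing_arc hn hab hd t ht
  have hcycle' : d ≠ s(b + 1, a) := by
    rintro rfl
    exact ne_oneDiagEdges_closing_arc hn hab.symm hd t (ht.trans oneDiagEdges_comm)
  obtain ⟨⟨p, hp⟩, -⟩ := t.2
  have hdp : d ∈ pathEdges p := by rw [← hp, ht]; exact mem_insert_self _ _
  induction d using Sym2.ind with | h x y => ?_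
  have hxy : x ≠ y := ne_of_mk_mem_pathEdges hdp
  have hx := endpoint_eq_of_eq_oneDiagEdges hn ht hd rfl
  have hy := endpoint_eq_of_eq_oneDiagEdges hn ht hd Sym2.eq_swap
  rcases hx with rfl | rfl | rfl | rfl <;> rcases hy with rfl | rfl | rfl | rfl <;>
    first
    | exact absurd rfl hxy
    | exact absurd (mk_mem_hullEdges_iff.2 (Or.inl rfl)) hd
    | exact absurd (mk_mem_hullEdges_iff.2 (Or.inr rfl)) hd
    | exact absurd rfl hcycle
    | exact absurd Sym2.eq_swap hcycle
    | exact absurd rfl hcycle'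
    | exact absurd Sym2.eq_swap hcycle'
    | exact Or.inl rfl
    | exact Or.inl Sym2.eq_swap
    | exact Or.inr rfl
    | exact Or.inr Sym2.eq_swap

end oneDiagonalPaths

section construction
variable {n : ℕ} [NeZero n] {a b : Fin n} {d : Sym2 (Fin n)}

lemma oneDiagEdges_subset : oneDiagEdges a b d ⊆ insert d (hullEdges n) :=
  insert_subset_insert _ ((erase_subset _ _).trans (erase_subset _ _))

lemma exists_eq_oneDiagEdges_of_injective (hn : 3 ≤ n) (hab : a ≠ b) (hd : d ∉ hullEdges n)
    {f : Fin n → Fin n} (hf : Function.Injective f)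
    (hE : ∀ i j : Fin n, j.val = i.val + 1 → s(f i, f j) ∈ oneDiagEdges a b d) :
    ∃ t : PVert n, t.1 = oneDiagEdges a b d := by
  have hp : pathEdges (Equiv.ofBijective f (Finite.injective_iff_bijective.1 hf)) =
      oneDiagEdges a b d :=
    pathEdges_eq_of_forall_mem (card_oneDiagEdges hn hab hd) hE
  exact ⟨⟨_, isNCPath_of_subset_insert (by omega) (hp ▸ oneDiagEdges_subset)⟩, hp⟩

/-- The path `b, b - 1, …, a + 1, b + 1, b + 2, …, a`. -/
lemma exists_eq_oneDiagEdges_add_one (hn : 3 ≤ n) (hab : a ≠ b)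
    (hd : s(a + 1, b + 1) ∉ hullEdges n) :
    ∃ t : PVert n, t.1 = oneDiagEdges a b s(a + 1, b + 1) := by
  refine exists_eq_oneDiagEdges_of_injective (f := fun i => if i.val < (b - a).val then b - i
    else a + 1 + i) hn hab hd (fun i j h => ?_) (fun i j hij => ?_)
  · dsimp only at h
    split_ifs at h with hi hj hj
    · exact sub_right_injective h
    · exact absurd (by linear_combination -h) (add_add_one_ne (by omega) hi (not_lt.1 hj))
    · exact absurd (by linear_combination h) (add_add_one_ne (by omega) hj (not_lt.1 hi))
    · exact add_left_cancel h
  obtain rfl := eq_add_one_of_val_eq hij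
  have hj0 : i + 1 ≠ 0 := fun h => by simp [h] at hij
  split_ifs with hi hj hj
  · rw [Sym2.eq_swap (a := b - i), show b - i = b - (i + 1) + 1 by ring]
    refine mk_mem_oneDiagEdges hn (fun h => ?_) (fun h => hj0 (by linear_combination -h))
    exact hj.ne (congrArg Fin.val (by linear_combination -h : i + 1 = b - a))
  · have : i + 1 = b - a := Fin.ext (by omega)
    rw [show b - i = a + 1 by linear_combination -this,
      show a + 1 + (i + 1) = b + 1 by linear_combination this]
    exact mem_insert_self _ _
  · omega
  · rw [← add_assoc]
    refine mk_mem_oneDiagEdges hn (fun h => hj0 (by linear_combination h)) (fun h => ?_)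
    have := congrArg Fin.val (by linear_combination h : i + 1 = b - a)
    omega

/-- The path `a + 1, a + 2, …, b, a, a - 1, …, b + 1`. -/
lemma exists_eq_oneDiagEdges_self (hn : 3 ≤ n) (hab : a ≠ b) (hd : s(a, b) ∉ hullEdges n) :
    ∃ t : PVert n, t.1 = oneDiagEdges a b s(a, b) := by
  refine exists_eq_oneDiagEdges_of_injective (f := fun i => if i.val < (b - a).val then a + 1 + i
    else b - i) hn hab hd (fun i j h => ?_) (fun i j hij => ?_)
  · dsimp only at h
    split_ifs at h with hi hj hj
    · exact add_left_cancel h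
    · exact absurd (by linear_combination h) (add_add_one_ne (by omega) hi (not_lt.1 hj))
    · exact absurd (by linear_combination -h) (add_add_one_ne (by omega) hj (not_lt.1 hi))
    · exact sub_right_injective h
  obtain rfl := eq_add_one_of_val_eq hij
  have hj0 : i + 1 ≠ 0 := fun h => by simp [h] at hij
  split_ifs with hi hj hj
  · rw [← add_assoc]
    refine mk_mem_oneDiagEdges hn (fun h => hj0 (by linear_combination h)) (fun h => ?_)
    exact hj.ne (congrArg Fin.val (by linear_combination h : i + 1 = b - a))
  · have : i + 1 = b - a := Fin.ext (by omega)
    rw [show a + 1 + i = b by linear_combination this,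
      show b - (i + 1) = a by linear_combination -this, Sym2.eq_swap]
    exact mem_insert_self _ _
  · omega
  · rw [Sym2.eq_swap (a := b - i), show b - i = b - (i + 1) + 1 by ring]
    refine mk_mem_oneDiagEdges hn (fun h => ?_) (fun h => hj0 (by linear_combination -h))
    have := congrArg Fin.val (by linear_combination -h : i + 1 = b - a)
    omega

end construction

section clique
variable {n : ℕ} [NeZero n]

lemma le_ncard_of_isMaxClique (hn : 3 ≤ n) {s : Set (PVert n)}
    (hmax : IsMaxClique (pathGraph n) s) (hs : ∀ t ∈ s, ∃ c, t = boundaryPath hn c) :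
    n ≤ s.ncard := by
  have hrange : Set.range (boundaryPath hn) ⊆ s := by
    rintro _ ⟨c, rfl⟩
    refine hmax.2 _ (hmax.1.insert fun t ht hne => ?_) (Set.subset_insert _ _) (Set.mem_insert _ _)
    obtain ⟨c', rfl⟩ := hs t ht
    exact boundaryPath_adj hn fun h => hne (h ▸ rfl)
  calc n = (Set.range (boundaryPath hn)).ncard := by
        rw [Set.ncard_range_of_injective (boundaryPath_injective hn), Nat.card_eq_fintype_card,
          Fintype.card_fin]
    _ ≤ s.ncard := Set.ncard_le_ncard hrange

lemma forall_eq_boundaryPath_of_isClique (hn : 3 ≤ n) {a : Fin n} (ha : a ≠ a + 1)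
    {s : Set (PVert n)} (hs : (pathGraph n).IsClique s) (has : boundaryPath hn a ∈ s)
    (ha1s : boundaryPath hn (a + 1) ∈ s) : ∀ t ∈ s, ∃ c, t = boundaryPath hn c := by
  intro t ht
  by_cases hta : t = boundaryPath hn a
  · exact ⟨a, hta⟩
  by_cases hta1 : t = boundaryPath hn (a + 1)
  · exact ⟨a + 1, hta1⟩
  obtain h | ⟨d, hd, htd⟩ := eq_boundaryPath_or_eq_oneDiagEdges hn ha
    (hs has ht (Ne.symm hta)) (hs ha1s ht (Ne.symm hta1))
  · exact h
  · obtain rfl | rfl := diagonal_eq_of_eq_oneDiagEdges hn ha htd hd <;>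
      exact absurd (mk_mem_hullEdges _) hd

lemma exists_eq_oneDiagEdges_of_adj (hn : 3 ≤ n) {a b : Fin n} {d : Sym2 (Fin n)} (hab : a ≠ b)
    (hd : d ∉ hullEdges n) {t w : PVert n} (hw : w.1 = oneDiagEdges a b d)
    (ha : (pathGraph n).Adj (boundaryPath hn a) t) (hb : (pathGraph n).Adj (boundaryPath hn b) t)
    (htw : (pathGraph n).Adj t w) : ∃ d' ∉ hullEdges n, t.1 = oneDiagEdges a b d' := by
  obtain ⟨c, rfl⟩ | h := eq_boundaryPath_or_eq_oneDiagEdges hn hab ha hb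
  · refine absurd htw (not_adj_boundaryPath_of_eq_oneDiagEdges hn hab hd ?_ ?_ hw) <;>
      rintro rfl
    exacts [ha.ne rfl, hb.ne rfl]
  · exact h

lemma exists_isMaxClique_ncard_four (hn : 3 ≤ n) {a b : Fin n} (hab : a ≠ b)
    (hshare : ¬ (b = a + 1 ∨ a = b + 1)) :
    ∃ s : Set (PVert n), IsMaxClique (pathGraph n) s ∧ s.ncard = 4 ∧
      boundaryPath hn a ∈ s ∧ boundaryPath hn b ∈ s := by
  have hd₁ : s(a + 1, b + 1) ∉ hullEdges n := by
    rwa [mk_mem_hullEdges_iff, add_left_inj, add_left_inj]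
  have hd₂ : s(a, b) ∉ hullEdges n := by rwa [mk_mem_hullEdges_iff]
  have hd₁₂ : s(a + 1, b + 1) ≠ s(a, b) := by
    intro h
    rcases Sym2.eq_iff.1 h with ⟨h₁, -⟩ | ⟨h₁, -⟩
    · rw [add_eq_left, Fin.one_eq_zero_iff] at h₁
      omega
    · exact hshare (Or.inl h₁.symm)
  obtain ⟨w₁, hw₁⟩ := exists_eq_oneDiagEdges_add_one hn hab hd₁
  obtain ⟨w₂, hw₂⟩ := exists_eq_oneDiagEdges_self hn hab hd₂
  have huv := boundaryPath_adj hn hab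
  have hu₁ := boundaryPath_adj_of_eq_oneDiagEdges hn hab hd₁ hw₁
  have hu₂ := boundaryPath_adj_of_eq_oneDiagEdges hn hab hd₂ hw₂
  have hv₁ := boundaryPath_adj_of_eq_oneDiagEdges hn hab.symm hd₁ (hw₁.trans oneDiagEdges_comm)
  have hv₂ := boundaryPath_adj_of_eq_oneDiagEdges hn hab.symm hd₂ (hw₂.trans (by
    rw [oneDiagEdges_comm, Sym2.eq_swap]))
  have h₁₂ := adj_of_eq_oneDiagEdges hd₁ hd₁₂ hw₁ hw₂
  refine ⟨{boundaryPath hn a, boundaryPath hn b, w₁, w₂}, ⟨?_, fun T hT hsT x hxT => ?_⟩, ?_,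
    by simp, by simp⟩
  · refine ((((pathGraph n).isClique_singleton w₂).insert ?_).insert ?_).insert ?_ <;> simp [*]
  · by_contra hx
    have hadj {y} (hy : y ∈ ({boundaryPath hn a, boundaryPath hn b, w₁, w₂} : Set _)) :
        (pathGraph n).Adj y x := hT (hsT hy) hxT fun h => hx (h ▸ hy)
    obtain ⟨d, hd, hxd⟩ := exists_eq_oneDiagEdges_of_adj hn hab hd₁ hw₁ (hadj (by simp))
      (hadj (by simp)) (hadj (by simp)).symm
    obtain rfl | rfl := diagonal_eq_of_eq_oneDiagEdges hn hab hxd hd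
    · exact hx (Subtype.ext (hxd.trans hw₁.symm) ▸ by simp)
    · exact hx (Subtype.ext (hxd.trans hw₂.symm) ▸ by simp)
  · rw [Set.ncard_insert_of_notMem, Set.ncard_insert_of_notMem, Set.ncard_pair h₁₂.ne]
    · simp [hv₁.ne, hv₂.ne]
    · simp [huv.ne, hu₁.ne, hu₂.ne]

end clique

/-- For two distinct boundary paths `u, v` with missing hull edges `eu, ev`:
`eu` and `ev` share an endpoint iff the edge `(u,v)` of `G(P)` is not contained
in any maximal clique of size 4. -/
theorem missing_edges_share_vertex_iff (n : ℕ) (hn : 5 ≤ n) (u v : PVert n)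
    (hu : IsBoundary u) (hv : IsBoundary v) (huv : u ≠ v)
    (eu ev : Sym2 (Fin n))
    (heu : IsHullEdge eu ∧ eu ∉ u.1) (hev : IsHullEdge ev ∧ ev ∉ v.1) :
    (∃ x : Fin n, x ∈ eu ∧ x ∈ ev) ↔
      ¬ ∃ s : Set (PVert n), IsMaxClique (pathGraph n) s ∧ s.ncard = 4 ∧
        u ∈ s ∧ v ∈ s := by
  have : NeZero n := ⟨by omega⟩
  have hn3 : 3 ≤ n := by omega
  have hsub {t : PVert n} (ht : IsBoundary t) : t.1 ⊆ hullEdges n :=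
    fun e he => (isHullEdge_iff (by omega)).1 (ht e he)
  obtain ⟨a, rfl⟩ := mem_hullEdges.1 ((isHullEdge_iff (by omega)).1 heu.1)
  obtain ⟨b, rfl⟩ := mem_hullEdges.1 ((isHullEdge_iff (by omega)).1 hev.1)
  obtain rfl := eq_boundaryPath hn3 (hsub hu) heu.2
  obtain rfl := eq_boundaryPath hn3 (hsub hv) hev.2
  have hab : a ≠ b := by
    rintro rfl
    exact huv rfl
  rw [exists_mem_mk_add_one_and_mem_iff hab]
  constructor
  · rintro hshare ⟨s, hmax, hcard, has, hbs⟩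
    have hboundary : ∀ t ∈ s, ∃ c, t = boundaryPath hn3 c := by
      rcases hshare with rfl | rfl
      · exact forall_eq_boundaryPath_of_isClique hn3 hab hmax.1 has hbs
      · exact forall_eq_boundaryPath_of_isClique hn3 hab.symm hmax.1 hbs has
    have := le_ncard_of_isMaxClique hn3 hmax hboundary
    omega
  · exact not_imp_comm.1 (exists_isMaxClique_ncard_four hn3 hab)

end PG
end
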